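/- Let X be a group and (X, ·, 𝒞) a convex group, i.e., 𝒞 is a convex structure on X such that multiplication m : X × X → X is convexity-preserving with respect to the product convex structure {C₁ × C₂ | Cᵢ ∈ 𝒞} and inversion r : X → X is convexity-preserving. Then (X, ·, ω_L(𝒞)) is a stratified L-convex group, i.e., m and r are L-convexity-preserving with respect to ω_L(𝒞) and its product ω_L(𝒞) × ω_L(𝒞). -/

import Mathlib

open scoped Classical

variable {X : Type*}

def IsConvex {X : Type*} (𝒞 : Set (Set X)) : Prop :=
  ∅ ∈ 𝒞 ∧ Set.univ ∈ 𝒞 ∧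
  (∀ S : Set (Set X), S ⊆ 𝒞 → ⋂₀ S ∈ 𝒞) ∧
  (∀ S : Set (Set X), S ⊆ 𝒞 → DirectedOn (· ⊆ ·) S → ⋃₀ S ∈ 𝒞)

def CP {X Y : Type*} (f : X → Y) (𝒞 : Set (Set X)) (𝒢 : Set (Set Y)) : Prop :=
  ∀ G ∈ 𝒢, f ⁻¹' G ∈ 𝒞

/-- product convex structure on `X × Y` -/
def prodConvex {X Y : Type*} (𝒞 : Set (Set X)) (𝒟 : Set (Set Y)) : Set (Set (X × Y)) :=
  {S | ∃ C ∈ 𝒞, ∃ D ∈ 𝒟, S = C ×ˢ D}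

def LCP {L : Type*} [CompleteLattice L] {X Y : Type*} (f : X → Y)
    (𝒞 : Set (X → L)) (𝔾 : Set (Y → L)) : Prop :=
  ∀ A ∈ 𝔾, (A ∘ f) ∈ 𝒞

def fprod {L : Type*} [CompleteLattice L] {X Y : Type*} (A : X → L) (B : Y → L) :
    X × Y → L :=
  fun p => A p.1 ⊓ B p.2

def prodStruct {L : Type*} [CompleteLattice L] {X Y : Type*}
    (𝒞 : Set (X → L)) (𝒟 : Set (Y → L)) : Set (X × Y → L) :=
  {F | ∃ C ∈ 𝒞, ∃ D ∈ 𝒟, F = fprod C D}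

noncomputable def chiSet {L : Type*} [CompleteLattice L] {X : Type*} (C : Set X) : X → L :=
  fun x => if x ∈ C then ⊤ else ⊥

def omegaBase (L : Type*) [CompleteLattice L] {X : Type*} (𝒞 : Set (Set X)) :
    Set (X → L) :=
  {A | ∃ a : L, ∃ C ∈ 𝒞, A = fun x => a ⊓ chiSet C x}

def omegaL (L : Type*) [CompleteLattice L] {X : Type*} (𝒞 : Set (Set X)) :
    Set (X → L) :=
  {A | ∃ S ⊆ omegaBase L 𝒞, DirectedOn (· ≤ ·) S ∧ A = sSup S}

/-!
Precomposition with a map and the marginal `x ↦ ⨆ y, F (x, y)` preserve suprema and send basic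
elements `a ⊓ χ_C` to basic elements, so they preserve `ω_L`. This makes inversion
L-convexity-preserving, and multiplication L-convexity-preserving into `ω_L(𝒞 × 𝒞)`.
It remains to see that `ω_L(𝒞 × 𝒟) ⊆ ω_L(𝒞) × ω_L(𝒟)`. A rectangle `a ⊓ χ_{C × D}` satisfies
`F (x, y') ⊓ F (x', y) ≤ F (x, y)`; by the frame law and directedness so does every member `F` of
`ω_L(𝒞 × 𝒟)`, and such an `F` is the product of its two marginals.
-/

section

variable {L Y : Type*}

namespace sSupHom

variable [CompleteLattice L]

def funLeft (f : X → Y) : sSupHom (Y → L) (X → L) where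
  toFun A := A ∘ f
  map_sSup' S := by
    ext x
    simp only [Function.comp_apply, sSup_apply_eq_sSup_image, Set.image_image]

def marginalFst : sSupHom (X × Y → L) (X → L) where
  toFun F x := ⨆ y, F (x, y)
  map_sSup' S := by
    ext x
    simp only [sSup_apply_eq_sSup_image, sSup_image, Set.image_image, Function.eval]
    exact iSup_comm.trans (iSup_congr fun _ => iSup_comm)

def marginalSnd : sSupHom (X × Y → L) (Y → L) :=
  (marginalFst (L := L)).comp (funLeft Prod.swap)

theorem mapsTo_omegaL (Φ : sSupHom (Y → L) (X → L)) {𝒞 : Set (Set X)} {𝒟 : Set (Set Y)}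
    (hΦ : Set.MapsTo Φ (omegaBase L 𝒟) (omegaBase L 𝒞)) :
    Set.MapsTo Φ (omegaL L 𝒟) (omegaL L 𝒞) := by
  rintro _ ⟨S, hSb, hSd, rfl⟩
  exact ⟨Φ '' S, (Set.image_mono hSb).trans hΦ.image_subset,
    hSd.mono_comp fun _ _ h => OrderHomClass.mono Φ h, map_sSup Φ S⟩

end sSupHom

open sSupHom

theorem CP.lcp_omegaL [CompleteLattice L] {f : X → Y} {𝒞 : Set (Set X)} {𝒟 : Set (Set Y)}
    (hf : CP f 𝒞 𝒟) : LCP f (omegaL L 𝒞) (omegaL L 𝒟) :=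
  (funLeft f).mapsTo_omegaL <| by
    rintro _ ⟨a, C, hC, rfl⟩
    exact ⟨a, f ⁻¹' C, hf C hC, rfl⟩

theorem cp_swap_prodConvex (𝒞 : Set (Set X)) (𝒟 : Set (Set Y)) :
    CP Prod.swap (prodConvex 𝒟 𝒞) (prodConvex 𝒞 𝒟) := by
  rintro _ ⟨C, hC, D, hD, rfl⟩
  exact ⟨D, hD, C, hC, Set.preimage_swap_prod C D⟩

section CompleteLattice

variable [CompleteLattice L]

theorem chiSet_prod (C : Set X) (D : Set Y) (p : X × Y) :
    (chiSet (C ×ˢ D) p : L) = chiSet C p.1 ⊓ chiSet D p.2 := by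
  by_cases h1 : p.1 ∈ C <;> by_cases h2 : p.2 ∈ D <;> simp [chiSet, h1, h2]

def IsRectangular (F : X × Y → L) : Prop :=
  ∀ x x' y y', F (x, y') ⊓ F (x', y) ≤ F (x, y)

theorem isRectangular_of_mem_omegaBase {𝒞 : Set (Set X)} {𝒟 : Set (Set Y)} {F : X × Y → L}
    (hF : F ∈ omegaBase L (prodConvex 𝒞 𝒟)) : IsRectangular F := by
  obtain ⟨a, _, ⟨C, -, D, -, rfl⟩, rfl⟩ := hF
  intro x x' y y'
  by_cases hx : x ∈ C <;> by_cases hy : y ∈ D <;> simp [chiSet, hx, hy, inf_assoc]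

end CompleteLattice

section Frame

variable [Order.Frame L]

theorem IsRectangular.sSup {S : Set (X × Y → L)} (hS : ∀ F ∈ S, IsRectangular F)
    (hSd : DirectedOn (· ≤ ·) S) : IsRectangular (sSup S) := by
  intro x x' y y'
  simp only [sSup_apply, iSup_inf_eq, inf_iSup_eq]
  refine iSup₂_le fun ⟨G, hG⟩ ⟨F, hF⟩ => ?_
  obtain ⟨H, hH, hFH, hGH⟩ := hSd F hF G hG
  calc F (x, y') ⊓ G (x', y) ≤ H (x, y') ⊓ H (x', y) := inf_le_inf (hFH _) (hGH _)
    _ ≤ H (x, y) := hS H hH x x' y y'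
    _ ≤ ⨆ K : S, (K : X × Y → L) (x, y) := le_iSup_of_le ⟨H, hH⟩ le_rfl

theorem isRectangular_of_mem_omegaL {𝒞 : Set (Set X)} {𝒟 : Set (Set Y)} {F : X × Y → L}
    (hF : F ∈ omegaL L (prodConvex 𝒞 𝒟)) : IsRectangular F := by
  obtain ⟨S, hSb, hSd, rfl⟩ := hF
  exact IsRectangular.sSup (fun _ hF => isRectangular_of_mem_omegaBase (hSb hF)) hSd

theorem IsRectangular.eq_fprod {F : X × Y → L} (hF : IsRectangular F) :
    F = fprod (marginalFst F) (marginalSnd F) := by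
  funext ⟨x, y⟩
  refine le_antisymm (le_inf (le_iSup_of_le y le_rfl) (le_iSup_of_le x le_rfl)) ?_
  show (⨆ y', F (x, y')) ⊓ (⨆ x', F (x', y)) ≤ F (x, y)
  rw [iSup_inf_eq]
  exact iSup_le fun y' => (inf_iSup_eq _ _).le.trans (iSup_le fun x' => hF x x' y y')

theorem marginalFst_mem_omegaL {𝒞 : Set (Set X)} {𝒟 : Set (Set Y)} {F : X × Y → L}
    (hF : F ∈ omegaL L (prodConvex 𝒞 𝒟)) : marginalFst F ∈ omegaL L 𝒞 := by
  refine marginalFst.mapsTo_omegaL ?_ hF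
  rintro _ ⟨a, _, ⟨C, hC, D, -, rfl⟩, rfl⟩
  refine ⟨⨆ y, a ⊓ chiSet D y, C, hC, funext fun x => ?_⟩
  show ⨆ y, a ⊓ chiSet (C ×ˢ D) (x, y) = (⨆ y, a ⊓ chiSet D y) ⊓ chiSet C x
  simp only [chiSet_prod, iSup_inf_eq]
  exact iSup_congr fun y => by ac_rfl

theorem marginalSnd_mem_omegaL {𝒞 : Set (Set X)} {𝒟 : Set (Set Y)} {F : X × Y → L}
    (hF : F ∈ omegaL L (prodConvex 𝒞 𝒟)) : marginalSnd F ∈ omegaL L 𝒟 :=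
  marginalFst_mem_omegaL ((cp_swap_prodConvex 𝒞 𝒟).lcp_omegaL F hF)

theorem omegaL_prodConvex_subset (𝒞 : Set (Set X)) (𝒟 : Set (Set Y)) :
    omegaL L (prodConvex 𝒞 𝒟) ⊆ prodStruct (omegaL L 𝒞) (omegaL L 𝒟) := fun _ hF =>
  ⟨_, marginalFst_mem_omegaL hF, _, marginalSnd_mem_omegaL hF,
    (isRectangular_of_mem_omegaL hF).eq_fprod⟩

end Frame

end

theorem convex_group_to_lconvex_group_general (L : Type*) [CompletelyDistribLattice L]
    [Group X] (𝒞 : Set (Set X))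
    (hm : CP (fun p : X × X => p.1 * p.2) (prodConvex 𝒞 𝒞) 𝒞)
    (hr : CP (fun x : X => x⁻¹) 𝒞 𝒞) :
    LCP (fun p : X × X => p.1 * p.2)
        (prodStruct (omegaL L 𝒞) (omegaL L 𝒞)) (omegaL L 𝒞) ∧
    LCP (fun x : X => x⁻¹) (omegaL L 𝒞) (omegaL L 𝒞) :=
  ⟨fun A hA => omegaL_prodConvex_subset 𝒞 𝒞 (hm.lcp_omegaL A hA), hr.lcp_omegaL⟩

theorem convex_group_to_lconvex_group (L : Type*) [CompletelyDistribLattice L]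
    [Group X] (𝒞 : Set (Set X)) (h : IsConvex 𝒞)
    (hm : CP (fun p : X × X => p.1 * p.2) (prodConvex 𝒞 𝒞) 𝒞)
    (hr : CP (fun x : X => x⁻¹) 𝒞 𝒞) :
    LCP (fun p : X × X => p.1 * p.2)
        (prodStruct (omegaL L 𝒞) (omegaL L 𝒞)) (omegaL L 𝒞) ∧
    LCP (fun x : X => x⁻¹) (omegaL L 𝒞) (omegaL L 𝒞) :=
  convex_group_to_lconvex_group_general L 𝒞 hm hr
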